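/- arXiv:2402.08860 — 4 statements merged into one kernel-verified Lean document; each statement's English description precedes it below -/
import Mathlib

section
/- Let H be a dense linear subspace of a locally convex space E, so that E' = H' as vector spaces. Then the strong topology β(E',E) on E' coincides with the strong topology β(E',H) if and only if H is large in E, i.e., every bounded subset of E is contained in the closure (taken in E) of a bounded subset of H. -/
/-!
Both strong topologies on `E'` have bases of neighbourhoods of `0` made of polars: the polars
`A°` of bounded `A ⊆ E` for `β(E',E)`, and the polars `B°` of bounded `B ⊆ H` for `β(E',H)`.
So the topologies coincide iff every such `A°` contains some such `B°`. By Hahn–Banach,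
`B° ⊆ A°` iff `A` lies in the closure of the absolutely convex hull of `B ∪ {0}`, and in a
locally convex space that hull is again a bounded subset of `H`.
-/

open Filter Topology Bornology Pointwise
open scoped ENNReal NNReal

noncomputable section

/-- A real sequence belongs to `ℓ_p` when `p ≠ ∞`, and to `c₀` when `p = ∞`. -/
def InLpC0 (p : ℝ≥0∞) (f : ℕ → ℝ) : Prop :=
  (p ≠ ∞ ∧ Memℓp f p) ∨ (p = ∞ ∧ Tendsto f atTop (nhds (0 : ℝ)))

/-- An `ℝ≥0∞`-valued sequence belongs to `ℓ_q` (i.e. `∑ (f n) ^ q < ∞`) when `q ≠ ∞`,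
and to `c₀` when `q = ∞`. -/
def InLpC0E (q : ℝ≥0∞) (f : ℕ → ℝ≥0∞) : Prop :=
  (q ≠ ∞ ∧ (∑' n, f n ^ q.toReal) ≠ ∞) ∨ (q = ∞ ∧ Tendsto f atTop (nhds (0 : ℝ≥0∞)))

variable {E : Type*} [AddCommGroup E] [Module ℝ E] [TopologicalSpace E]

/-- A sequence `x` in a topological vector space `E` is weakly `p`-summable if
`(χ (x n))ₙ ∈ ℓ_p` (resp. `∈ c₀` if `p = ∞`) for every continuous linear functional `χ` on `E`. -/
def WeaklySummable (p : ℝ≥0∞) (x : ℕ → E) : Prop :=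
  ∀ χ : E →L[ℝ] ℝ, InLpC0 p fun n => χ (x n)

/-- `A ⊆ E` is a `(p,q)`-`(V*)` set: for every weakly `p`-summable sequence `(χ n)` in the
strong dual `E'_β` (the default topology on `E →L[ℝ] ℝ` is the strong topology), the sequence
`(sup_{a ∈ A} |χ n a|)ₙ` belongs to `ℓ_q` (to `c₀` if `q = ∞`). -/
def IsVAstSet (p q : ℝ≥0∞) (A : Set E) : Prop :=
  ∀ χ : ℕ → (E →L[ℝ] ℝ), WeaklySummable p χ →
    InLpC0E q fun n => ⨆ a ∈ A, (‖χ n a‖₊ : ℝ≥0∞)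

/-- `B ⊆ E'` is a `(p,q)`-`(V)` set: for every weakly `p`-summable sequence `(x n)` in `E`,
the sequence `(sup_{χ ∈ B} |χ (x n)|)ₙ` belongs to `ℓ_q` (to `c₀` if `q = ∞`). -/
def IsVSet (p q : ℝ≥0∞) (B : Set (E →L[ℝ] ℝ)) : Prop :=
  ∀ x : ℕ → E, WeaklySummable p x → InLpC0E q fun n => ⨆ χ ∈ B, (‖χ (x n)‖₊ : ℝ≥0∞)

/-- The `p`-Schur property: every weakly `p`-summable sequence converges to `0`. -/
def HasPSchur (p : ℝ≥0∞) (F : Type*) [AddCommGroup F] [Module ℝ F] [TopologicalSpace F] : Prop :=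
  ∀ x : ℕ → F, WeaklySummable p x → Tendsto x atTop (nhds 0)

/-- The identity map into `F` equipped with its weak topology. -/
def toWeakSp {F : Type*} [AddCommGroup F] [Module ℝ F] [TopologicalSpace F] (x : F) :
    WeakSpace ℝ F := x

/-- A set `A ⊆ F` viewed as a subset of `F` with its weak topology. -/
def inWeak {F : Type*} [AddCommGroup F] [Module ℝ F] [TopologicalSpace F] (A : Set F) :
    Set (WeakSpace ℝ F) := toWeakSp '' A

namespace Bornology.IsVonNBounded

variable {𝕜 E F : Type*} [NormedField 𝕜] [AddCommGroup E] [Module 𝕜 E] [TopologicalSpace E]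

theorem smul_set {s : Set E} (hs : IsVonNBounded 𝕜 s) (c : 𝕜) : IsVonNBounded 𝕜 (c • s) := by
  rw [isVonNBounded_iff_tendsto_smallSets_nhds] at hs ⊢
  have hc : Tendsto (· * c) (𝓝 (0 : 𝕜)) (𝓝 0) := by
    simpa using (continuous_mul_const c).tendsto 0
  simpa only [Function.comp_def, smul_smul] using hs.comp hc

theorem preimage_of_isInducing [AddCommGroup F] [Module 𝕜 F] [TopologicalSpace F]
    {f : E →ₗ[𝕜] F} (hf : IsInducing f) {s : Set F} (hs : IsVonNBounded 𝕜 s) :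
    IsVonNBounded 𝕜 (f ⁻¹' s) := by
  rw [isVonNBounded_iff_tendsto_smallSets_nhds, hf.nhds_eq_comap, map_zero,
    tendsto_smallSets_iff]
  rintro t ⟨u, hu, hut⟩
  filter_upwards [hs.tendsto_smallSets_nhds.eventually (eventually_smallSets_subset.2 hu)]
    with c hc
  rintro _ ⟨x, hx, rfl⟩
  exact hut (by simpa using hc (Set.smul_mem_smul_set hx))

end Bornology.IsVonNBounded

theorem Bornology.IsVonNBounded.absConvexHull {E : Type*} [AddCommGroup E] [Module ℝ E]
    [TopologicalSpace E] [ContinuousSMul ℝ E] [LocallyConvexSpace ℝ E] {s : Set E}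
    (hs : IsVonNBounded ℝ s) : IsVonNBounded ℝ (absConvexHull ℝ s) := by
  rw [(nhds_hasBasis_absConvex ℝ E).isVonNBounded_iff]
  rintro V ⟨hV0, hV⟩
  exact Eventually.mono (hs hV0) fun c hc => absConvexHull_min hc ⟨hV.1.smul c, hV.2.smul c⟩

namespace StrongDual

variable {𝕜 E F : Type*} [NontriviallyNormedField 𝕜] [AddCommGroup E] [Module 𝕜 E]
  [TopologicalSpace E] [AddCommGroup F] [Module 𝕜 F] [TopologicalSpace F]

theorem hasBasis_nhds_zero_polar :
    (𝓝 (0 : StrongDual 𝕜 E)).HasBasis (IsVonNBounded 𝕜) (polar 𝕜) := by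
  refine ContinuousLinearMap.hasBasis_nhds_zero.to_hasBasis ?_ fun s hs =>
    ⟨(s, Metric.closedBall 0 1), ⟨hs, Metric.closedBall_mem_nhds _ one_pos⟩, fun χ hχ x hx => by
      simpa using hχ x hx⟩
  rintro ⟨s, V⟩ ⟨hs, hV⟩
  obtain ⟨r, hr, hrV⟩ := Metric.nhds_basis_closedBall.mem_iff.mp hV
  obtain ⟨c, hc⟩ := NormedField.exists_lt_norm 𝕜 r⁻¹
  have hc0 : 0 < ‖c‖ := (inv_pos.2 hr).trans hc
  refine ⟨c • s, hs.smul_set c, fun χ hχ x hx => hrV ?_⟩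
  have hχx : ‖c‖ * ‖χ x‖ ≤ 1 := by
    simpa [norm_smul] using hχ (c • x) (Set.smul_mem_smul_set hx)
  rw [mem_closedBall_zero_iff]
  calc ‖χ x‖ ≤ ‖c‖⁻¹ := by rw [← mul_one ‖c‖⁻¹]; exact (le_inv_mul_iff₀ hc0).2 hχx
    _ ≤ r := (inv_le_comm₀ hc0 hr).2 hc.le

theorem polar_image (L : F →L[𝕜] E) (s : Set F) :
    polar 𝕜 (L '' s) = (fun χ : StrongDual 𝕜 E => χ.comp L) ⁻¹' polar 𝕜 s := by
  ext χ
  simp [mem_polar_iff]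

end StrongDual

open StrongDual in
theorem ContinuousLinearMap.isInducing_precomp_iff {𝕜 E F : Type*} [NontriviallyNormedField 𝕜]
    [AddCommGroup E] [Module 𝕜 E] [TopologicalSpace E] [AddCommGroup F] [Module 𝕜 F]
    [TopologicalSpace F] (L : F →L[𝕜] E) :
    IsInducing (fun χ : StrongDual 𝕜 E => χ.comp L) ↔ ∀ A : Set E, IsVonNBounded 𝕜 A →
      ∃ B : Set F, IsVonNBounded 𝕜 B ∧ polar 𝕜 (L '' B) ⊆ polar 𝕜 A := by
  set f : StrongDual 𝕜 E →L[𝕜] StrongDual 𝕜 F := precomp 𝕜 L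
  have hle : 𝓝 0 ≤ (𝓝 0).comap f := by simpa using (f.continuous.tendsto 0).le_comap
  change IsInducing f ↔ _
  rw [IsTopologicalAddGroup.isInducing_iff_nhds_zero, le_antisymm_iff, and_iff_right hle,
    (hasBasis_nhds_zero_polar.comap _).le_basis_iff hasBasis_nhds_zero_polar]
  simp only [polar_image]
  rfl

theorem Submodule.absConvex {E : Type*} [AddCommGroup E] [Module ℝ E] (H : Submodule ℝ E) :
    AbsConvex ℝ (H : Set E) :=
  ⟨balanced_iff_smul_mem.2 fun _ _ _ hx => H.smul_mem _ hx, H.convex⟩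

section LocallyConvex

variable {E : Type*} [AddCommGroup E] [Module ℝ E] [TopologicalSpace E] [IsTopologicalAddGroup E]
  [ContinuousSMul ℝ E] [LocallyConvexSpace ℝ E]

theorem geometric_hahn_banach_absConvex_point {D : Set E} (hD : AbsConvex ℝ D)
    (hDc : IsClosed D) (hD0 : (0 : E) ∈ D) {a : E} (ha : a ∉ D) :
    ∃ χ : StrongDual ℝ E, (∀ x ∈ D, |χ x| < 1) ∧ 1 < χ a := by
  obtain ⟨g, u, hgu, hua⟩ := geometric_hahn_banach_closed_point hD.2 hDc ha
  have hu : 0 < u := by simpa using hgu 0 hD0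
  refine ⟨u⁻¹ • g, fun x hx => ?_, by simpa [one_lt_inv_mul₀ hu] using hua⟩
  have hneg : -g x < u := by simpa using hgu (-x) (hD.1.neg_mem_iff.2 hx)
  simpa [abs_mul, abs_of_pos hu, inv_mul_lt_one₀ hu] using abs_lt.2 ⟨neg_lt.1 hneg, hgu x hx⟩

/-- The bipolar theorem: the bipolar of `s` is `closedAbsConvexHull ℝ (insert 0 s)`. -/
theorem StrongDual.polar_subset_polar_iff {s t : Set E} :
    polar ℝ s ⊆ polar ℝ t ↔ t ⊆ closedAbsConvexHull ℝ (insert 0 s) := by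
  constructor
  · intro hst a ha
    by_contra haD
    obtain ⟨χ, hχD, hχa⟩ := geometric_hahn_banach_absConvex_point absConvex_convexClosedHull
      isClosed_closedAbsConvexHull (subset_closedAbsConvexHull (Set.mem_insert 0 s)) haD
    have hχs : χ ∈ polar ℝ s := fun x hx =>
      (hχD x (subset_closedAbsConvexHull (Set.mem_insert_of_mem 0 hx))).le
    exact ((mem_polar_iff ℝ t).1 (hst hχs) a ha).not_gt (hχa.trans_le (Real.le_norm_self _))
  · intro hts χ hχ a ha
    have hball : AbsConvex ℝ (χ ⁻¹' Metric.closedBall 0 1) :=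
      ⟨balanced_closedBall_zero.mulActionHom_preimage (χ : E →ₗ[ℝ] ℝ).toMulActionHom,
        (convex_closedBall 0 1).linear_preimage (χ : E →ₗ[ℝ] ℝ)⟩
    have hsub : insert 0 s ⊆ χ ⁻¹' Metric.closedBall 0 1 := by
      rintro x (rfl | hx)
      · simp
      · simpa using hχ x hx
    simpa using closedAbsConvexHull_min hsub hball
      (Metric.isClosed_closedBall.preimage χ.continuous) (hts ha)

theorem Submodule.exists_isVonNBounded_subset_closedAbsConvexHull_iff (H : Submodule ℝ E)
    (A : Set E) :
    (∃ B : Set H, IsVonNBounded ℝ B ∧ A ⊆ closedAbsConvexHull ℝ (insert 0 ((↑) '' B))) ↔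
      ∃ B : Set H, IsVonNBounded ℝ B ∧ A ⊆ closure ((↑) '' B) := by
  constructor
  · rintro ⟨B, hB, hA⟩
    set C := absConvexHull ℝ (insert 0 (((↑) : H → E) '' B))
    have hCH : C ⊆ H := absConvexHull_min
      (Set.insert_subset H.zero_mem (Set.image_subset_iff.2 fun x _ => x.2)) H.absConvex
    have hC : IsVonNBounded ℝ C := ((hB.image H.subtypeL).insert 0).absConvexHull
    refine ⟨(↑) ⁻¹' C, hC.preimage_of_isInducing (f := H.subtype) IsInducing.subtypeVal, ?_⟩
    rwa [Set.image_preimage_eq_of_subset (by rwa [Subtype.range_coe_subtype]),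
      ← closedAbsConvexHull_eq_closure_absConvexHull]
  · rintro ⟨B, hB, hA⟩
    exact ⟨B, hB, hA.trans <| closure_subset_closedAbsConvexHull.trans <|
      (closedAbsConvexHull ℝ).monotone (Set.subset_insert _ _)⟩

end LocallyConvex

/-- `β(E',H)` is the topology induced on `E'` by restriction to `H` from the strong dual of `H`,
so the two strong topologies coincide iff restriction is inducing. -/
theorem strong_topologies_coincide_iff_large_general
    {E : Type*} [AddCommGroup E] [Module ℝ E] [TopologicalSpace E]
    [IsTopologicalAddGroup E] [ContinuousSMul ℝ E] [LocallyConvexSpace ℝ E]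
    (H : Submodule ℝ E) :
    IsInducing (fun χ : E →L[ℝ] ℝ => χ.comp H.subtypeL) ↔
      ∀ A : Set E, IsVonNBounded ℝ A →
        ∃ B : Set ↥H, IsVonNBounded ℝ B ∧ A ⊆ closure ((↑) '' B : Set E) := by
  refine (ContinuousLinearMap.isInducing_precomp_iff H.subtypeL).trans
    (forall₂_congr fun A _ => ?_)
  simp only [StrongDual.polar_subset_polar_iff]
  exact H.exists_isVonNBounded_subset_closedAbsConvexHull_iff A

/-- Let `H` be a dense linear subspace of a locally convex space `E` (so that restriction
identifies `E'` with a subspace of `H'`, and the topology `β(E',H)` on `E'` is the topology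
induced from the strong dual `H'_β` by the restriction map). Then `β(E',E)` coincides with
`β(E',H)` — i.e. the restriction map `E'_β → H'_β` is inducing — iff `H` is large in `E`:
every bounded subset of `E` is contained in the closure (in `E`) of a bounded subset of `H`. -/
theorem strong_topologies_coincide_iff_large
    {E : Type*} [AddCommGroup E] [Module ℝ E] [TopologicalSpace E]
    [IsTopologicalAddGroup E] [ContinuousSMul ℝ E] [LocallyConvexSpace ℝ E]
    (H : Submodule ℝ E) (hH : Dense (H : Set E)) :
    IsInducing (fun χ : E →L[ℝ] ℝ => χ.comp H.subtypeL) ↔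
      ∀ A : Set E, IsVonNBounded ℝ A →
        ∃ B : Set ↥H, IsVonNBounded ℝ B ∧ A ⊆ closure ((↑) '' B : Set E) :=
  strong_topologies_coincide_iff_large_general H

end
end

section
/- Let 1 < p < ∞, let p* be the conjugate exponent of p (1/p + 1/p* = 1), and let E be a locally convex space. Then for every continuous linear operator S : ℓ_{p*} → E, the image S(B_{ℓ_{p*}}) of the closed unit ball of ℓ_{p*} is a weakly sequentially p-compact subset of E: every sequence in S(B_{ℓ_{p*}}) has a subsequence that weakly p-converges to a point of S(B_{ℓ_{p*}}). -/
open Filter Topology Bornology Pointwise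
open scoped ENNReal NNReal

noncomputable section

variable {E : Type*} [AddCommGroup E] [Module ℝ E] [TopologicalSpace E]

/-! Pulling the sequence back to the unit ball of `ℓ_{p*}`, Tychonoff gives a subsequence converging
coordinatewise to some `c` in the ball. A gliding hump refines it so that the differences
`vₙ - c` are summably close to vectors supported on consecutive disjoint blocks of indices.
A functional `g` on `ℓ_{p*}` has coefficients `(g eᵢ)` in `ℓ_p` of norm at most `‖g‖`, so by
Hölder's inequality its values on the block vectors are `p`-summable. Weak `p`-summability then
passes to `E` through `S`. -/

theorem WeaklySummable.map {p : ℝ≥0∞} {x : ℕ → E} (hx : WeaklySummable p x)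
    {F : Type*} [AddCommGroup F] [Module ℝ F] [TopologicalSpace F] (S : E →L[ℝ] F) :
    WeaklySummable p fun n => S (x n) :=
  fun χ => hx (χ.comp S)

theorem exists_strictMono_monotone_of_forall_exists {P : ℕ → ℕ → ℕ → ℕ → Prop}
    (h : ∀ k n a, ∃ n' > n, ∃ b ≥ a, P k n' a b) :
    ∃ ψ : ℕ → ℕ, StrictMono ψ ∧ ∃ m : ℕ → ℕ, Monotone m ∧ ∀ k, P k (ψ k) (m k) (m (k + 1)) := by
  choose next hnext b hb hP using h
  let s : ℕ → ℕ × ℕ := fun k =>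
    Nat.rec (motive := fun _ => ℕ × ℕ) (0, 0) (fun j t => (next j t.1 t.2, b j t.1 t.2)) k
  exact ⟨fun k => (s (k + 1)).1, strictMono_nat_of_lt_succ fun k => hnext _ _ _,
    fun k => (s k).2, monotone_nat_of_le_succ fun k => hb _ _ _, fun k => hP _ _ _⟩

theorem Real.HolderConjugate.exists_norming_coeff {p q : ℝ} (hpq : p.HolderConjugate q) (x : ℝ) :
    ∃ a : ℝ, a * x = |x| ^ p ∧ |a| ^ q = |x| ^ p := by
  refine ⟨SignType.sign x * |x| ^ (p - 1), ?_, ?_⟩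
  · rw [mul_right_comm, sign_mul_self, mul_comm, ← Real.rpow_add_one' (abs_nonneg x)
      (by simpa using hpq.ne_zero), sub_add_cancel]
  · rcases eq_or_ne x 0 with rfl | hx
    · simp [Real.zero_rpow hpq.symm.ne_zero, Real.zero_rpow hpq.ne_zero,
        Real.zero_rpow (sub_pos.2 hpq.lt).ne']
    · have hsign : |(SignType.sign x : ℝ)| = 1 := by
        rcases hx.lt_or_gt with h | h <;> simp [h]
      rw [abs_mul, hsign, one_mul, abs_of_nonneg (by positivity), ← Real.rpow_mul (abs_nonneg x),
        hpq.sub_one_mul_conj]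

namespace lp

variable {ι : Type*} {p q : ℝ≥0∞} [Fact (1 ≤ q)]

theorem apply_single [DecidableEq ι] (g : lp (fun _ : ι => ℝ) q →L[ℝ] ℝ) (i : ι) (c : ℝ) :
    g (lp.single q i c) = c * g (lp.single q i 1) := by
  rw [← smul_eq_mul, ← map_smul, ← lp.single_smul, smul_eq_mul, mul_one]

theorem sum_abs_apply_single_rpow_le [DecidableEq ι] (hpq : p.toReal.HolderConjugate q.toReal)
    (g : lp (fun _ : ι => ℝ) q →L[ℝ] ℝ) (s : Finset ι) :
    ∑ i ∈ s, |g (lp.single q i 1)| ^ p.toReal ≤ ‖g‖ ^ p.toReal := by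
  choose a ha using fun i => hpq.exists_norming_coeff (g (lp.single q i 1))
  set z : lp (fun _ : ι => ℝ) q := ∑ i ∈ s, lp.single q i (a i)
  have hgz : g z = ∑ i ∈ s, |g (lp.single q i 1)| ^ p.toReal := by
    simp only [z, map_sum, apply_single g _ (a _), ha]
  have hz : ‖z‖ ^ q.toReal = ∑ i ∈ s, |g (lp.single q i 1)| ^ p.toReal := by
    simp only [z, lp.norm_sum_single hpq.symm.pos, Real.norm_eq_abs, ha]
  rw [← hz]
  rcases (norm_nonneg z).eq_or_lt with hz0 | hz0
  · rw [← hz0, Real.zero_rpow hpq.symm.ne_zero]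
    positivity
  have hle : ‖z‖ ^ (q.toReal - 1) ≤ ‖g‖ := by
    refine le_of_mul_le_mul_right ?_ hz0
    calc ‖z‖ ^ (q.toReal - 1) * ‖z‖ = g z := by
          rw [← Real.rpow_add_one' (norm_nonneg z) (by simpa using hpq.symm.ne_zero),
            sub_add_cancel, hz, hgz]
    _ ≤ ‖g‖ * ‖z‖ := (le_abs_self _).trans (g.le_opNorm z)
  calc ‖z‖ ^ q.toReal = (‖z‖ ^ (q.toReal - 1)) ^ p.toReal := by
        rw [← Real.rpow_mul (norm_nonneg z), hpq.symm.sub_one_mul_conj]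
  _ ≤ ‖g‖ ^ p.toReal := by gcongr

theorem abs_apply_sum_single_rpow_le [DecidableEq ι] (hpq : p.toReal.HolderConjugate q.toReal)
    (g : lp (fun _ : ι => ℝ) q →L[ℝ] ℝ) (y : lp (fun _ : ι => ℝ) q) (s : Finset ι) :
    |g (∑ i ∈ s, lp.single q i (y i))| ^ p.toReal ≤
      (∑ i ∈ s, |g (lp.single q i 1)| ^ p.toReal) * ‖y‖ ^ p.toReal := by
  set A := ∑ i ∈ s, |g (lp.single q i 1)| ^ p.toReal
  have hy : (∑ i ∈ s, |y i| ^ q.toReal) ^ (1 / q.toReal) ≤ ‖y‖ := by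
    rw [one_div, Real.rpow_inv_le_iff_of_pos (by positivity) (norm_nonneg y) hpq.symm.pos]
    simpa only [Real.norm_eq_abs] using lp.sum_rpow_le_norm_rpow hpq.symm.pos y s
  have hHolder : |g (∑ i ∈ s, lp.single q i (y i))| ≤ A ^ p.toReal⁻¹ * ‖y‖ :=
    calc |g (∑ i ∈ s, lp.single q i (y i))| = |∑ i ∈ s, y i * g (lp.single q i 1)| := by
          simp only [map_sum, apply_single g _ (y _)]
    _ ≤ ∑ i ∈ s, |g (lp.single q i 1)| * |y i| := by
          simpa only [abs_mul, mul_comm] using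
            Finset.abs_sum_le_sum_abs (fun i => y i * g (lp.single q i 1)) s
    _ ≤ A ^ (1 / p.toReal) * (∑ i ∈ s, |y i| ^ q.toReal) ^ (1 / q.toReal) := by
          simpa only [abs_abs] using Real.inner_le_Lp_mul_Lq s (fun i => |g (lp.single q i 1)|)
            (fun i => |y i|) hpq
    _ ≤ A ^ p.toReal⁻¹ * ‖y‖ := by rw [one_div]; gcongr
  calc |g (∑ i ∈ s, lp.single q i (y i))| ^ p.toReal ≤ (A ^ p.toReal⁻¹ * ‖y‖) ^ p.toReal := by
        gcongr
  _ = A * ‖y‖ ^ p.toReal := by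
        rw [Real.mul_rpow (by positivity) (norm_nonneg y),
          Real.rpow_inv_rpow (by positivity) hpq.ne_zero]

theorem memℓp_apply_sum_single_Ico (hpq : p.toReal.HolderConjugate q.toReal)
    (g : lp (fun _ : ℕ => ℝ) q →L[ℝ] ℝ) {y : ℕ → lp (fun _ : ℕ => ℝ) q} {C : ℝ}
    (hy : ∀ k, ‖y k‖ ≤ C) {m : ℕ → ℕ} (hm : Monotone m) :
    Memℓp (fun k => g (∑ i ∈ Finset.Ico (m k) (m (k + 1)), lp.single q i (y k i))) p := by
  set t : ℕ → ℝ := fun i => |g (lp.single q i 1)| ^ p.toReal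
  have hblocks : Summable fun k => ∑ i ∈ Finset.Ico (m k) (m (k + 1)), t i := by
    refine summable_of_sum_range_le (c := ‖g‖ ^ p.toReal) (fun k => by positivity) fun K => ?_
    have htelescope : ∑ k ∈ Finset.range K, ∑ i ∈ Finset.Ico (m k) (m (k + 1)), t i =
        ∑ i ∈ Finset.Ico (m 0) (m K), t i := by
      induction K with
      | zero => simp
      | succ K ih =>
        rw [Finset.sum_range_succ, ih,
          Finset.sum_Ico_consecutive _ (hm K.zero_le) (hm K.le_succ)]
    exact htelescope ▸ sum_abs_apply_single_rpow_le hpq g _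
  refine memℓp_gen ((hblocks.mul_right (C ^ p.toReal)).of_nonneg_of_le (fun k => by positivity)
    fun k => ?_)
  rw [Real.norm_eq_abs]
  refine (abs_apply_sum_single_rpow_le hpq g (y k) _).trans ?_
  gcongr
  exact hy k

theorem memℓp_apply_of_norm_sub_sum_single_Ico_le (hpq : p.toReal.HolderConjugate q.toReal)
    (g : lp (fun _ : ℕ => ℝ) q →L[ℝ] ℝ) {y : ℕ → lp (fun _ : ℕ => ℝ) q} {C : ℝ}
    (hy : ∀ k, ‖y k‖ ≤ C) {m : ℕ → ℕ} (hm : Monotone m) {ε : ℕ → ℝ} (hε : Memℓp ε p)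
    (hyε : ∀ k, ‖y k - ∑ i ∈ Finset.Ico (m k) (m (k + 1)), lp.single q i (y k i)‖ ≤ ε k) :
    Memℓp (fun k => g (y k)) p := by
  have hrest : Memℓp (fun k => g (y k - ∑ i ∈ Finset.Ico (m k) (m (k + 1)),
      lp.single q i (y k i))) p :=
    (hε.const_mul ‖g‖).mono fun k => (g.le_opNorm _).trans (by gcongr; exact hyε k)
  convert (memℓp_apply_sum_single_Ico hpq g hy hm).add hrest using 1
  ext k
  simp only [Pi.add_apply, map_sub, add_sub_cancel]

section GlidingHump

variable {G : ℕ → Type*} [∀ i, NormedAddCommGroup (G i)]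

theorem tendsto_sum_range_single_zero {y : ℕ → lp G q}
    (hy : ∀ i, Tendsto (fun n => y n i) atTop (𝓝 0)) (a : ℕ) :
    Tendsto (fun n => ∑ i ∈ Finset.range a, lp.single q i (y n i)) atTop (𝓝 0) := by
  have hsingle (i : ℕ) : Tendsto (fun n => lp.single q i (y n i)) atTop (𝓝 0) := by
    simpa only [lp.single_zero, Function.comp_def] using
      ((lp.isometry_single i).continuous.tendsto 0).comp (hy i)
  simpa only [Finset.sum_const_zero] using tendsto_finsetSum _ fun i _ => hsingle i

theorem exists_norm_sub_sum_single_Ico_lt (hq : q ≠ ∞) {y : ℕ → lp G q}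
    (hy : ∀ i, Tendsto (fun n => y n i) atTop (𝓝 0)) {ε : ℝ} (hε : 0 < ε) (N a : ℕ) :
    ∃ n > N, ∃ b ≥ a, ‖y n - ∑ i ∈ Finset.Ico a b, lp.single q i (y n i)‖ < ε := by
  obtain ⟨n, hnN, hhead⟩ := ((eventually_gt_atTop N).and
    ((tendsto_sum_range_single_zero hy a).eventually (Metric.ball_mem_nhds 0 (half_pos hε)))).exists
  obtain ⟨b, hba, htail⟩ := ((eventually_ge_atTop a).and
    ((lp.hasSum_single hq (y n)).tendsto_sum_nat.eventually
      (Metric.ball_mem_nhds (y n) (half_pos hε)))).exists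
  rw [dist_zero_right] at hhead
  rw [dist_eq_norm'] at htail
  refine ⟨n, hnN, b, hba, ?_⟩
  calc ‖y n - ∑ i ∈ Finset.Ico a b, lp.single q i (y n i)‖
      = ‖(y n - ∑ i ∈ Finset.range b, lp.single q i (y n i)) +
          ∑ i ∈ Finset.range a, lp.single q i (y n i)‖ := by
        rw [Finset.sum_Ico_eq_sub _ hba, sub_sub_eq_add_sub, add_sub_right_comm]
  _ ≤ _ := norm_add_le _ _
  _ < ε / 2 + ε / 2 := add_lt_add htail hhead
  _ = ε := add_halves ε

end GlidingHump

theorem exists_subseq_tendsto_coe_of_norm_le [Countable ι] {G : ι → Type*}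
    [∀ i, NormedAddCommGroup (G i)] [∀ i, ProperSpace (G i)] {v : ℕ → lp G q} {C : ℝ}
    (hv : ∀ n, ‖v n‖ ≤ C) :
    ∃ c : lp G q, ‖c‖ ≤ C ∧ ∃ φ : ℕ → ℕ, StrictMono φ ∧
      Tendsto (fun n => (v (φ n) : ∀ i, G i)) atTop (𝓝 c) := by
  have hq : q ≠ 0 := (zero_lt_one.trans_le Fact.out).ne'
  obtain ⟨c, -, φ, hφ, hlim⟩ := (isCompact_univ_pi fun i => isCompact_closedBall (0 : G i) C)
    |>.tendsto_subseq (x := fun n => (v n : ∀ i, G i)) fun n i _ =>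
      mem_closedBall_zero_iff.2 ((lp.norm_apply_le_norm hq (v n) i).trans (hv n))
  have hbdd : IsBounded (Set.range fun n => v (φ n)) :=
    isBounded_iff_forall_norm_le.2 ⟨C, Set.forall_mem_range.2 fun n => hv (φ n)⟩
  exact ⟨⟨c, lp.memℓp_of_tendsto hbdd hlim⟩,
    lp.norm_le_of_tendsto (Eventually.of_forall fun n => hv (φ n)) hlim, φ, hφ, hlim⟩

theorem exists_weaklySummable_sub_of_norm_le (hpq : p.toReal.HolderConjugate q.toReal)
    {v : ℕ → lp (fun _ : ℕ => ℝ) q} {C : ℝ} (hv : ∀ n, ‖v n‖ ≤ C) :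
    ∃ c : lp (fun _ : ℕ => ℝ) q, ‖c‖ ≤ C ∧ ∃ φ : ℕ → ℕ, StrictMono φ ∧
      WeaklySummable p fun n => v (φ n) - c := by
  have hp : p ≠ ∞ := (ENNReal.toReal_pos_iff.1 hpq.pos).2.ne
  have hq : q ≠ ∞ := (ENNReal.toReal_pos_iff.1 hpq.symm.pos).2.ne
  obtain ⟨c, hc, φ, hφ, hlim⟩ := exists_subseq_tendsto_coe_of_norm_le hv
  have hcoord (i : ℕ) : Tendsto (fun n => (v (φ n) - c) i) atTop (𝓝 0) := by
    simpa only [lp.coeFn_sub, Pi.sub_apply, sub_self] using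
      (tendsto_pi_nhds.1 hlim i).sub_const (c i)
  have hbound (n : ℕ) : ‖v (φ n) - c‖ ≤ C + C := (norm_sub_le _ _).trans (add_le_add (hv _) hc)
  have hε : Memℓp (fun k : ℕ => (2⁻¹ : ℝ) ^ k) p :=
    (memℓp_gen (p := 1) (by simpa using summable_geometric_two)).of_exponent_ge
      ((ENNReal.toReal_le_toReal ENNReal.one_ne_top hp).1 (by simpa using hpq.lt.le))
  obtain ⟨ψ, hψ, m, hm, hnear⟩ := exists_strictMono_monotone_of_forall_exists fun k N a =>
    exists_norm_sub_sum_single_Ico_lt hq hcoord (ε := 2⁻¹ ^ k) (by positivity) N a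
  exact ⟨c, hc, φ ∘ ψ, hφ.comp hψ, fun χ => Or.inl ⟨hp,
    memℓp_apply_of_norm_sub_sum_single_Ico_le hpq χ (fun k => hbound _) hm hε
      fun k => (hnear k).le⟩⟩

end lp

theorem image_ball_weakly_seq_p_compact_general (p pst : ℝ≥0∞) (hp1 : 1 < p) (hp2 : p ≠ ∞)
    (hconj : p⁻¹ + pst⁻¹ = 1) [Fact (1 ≤ pst)]
    {E : Type*} [AddCommGroup E] [Module ℝ E] [TopologicalSpace E]
    (S : lp (fun _ : ℕ => ℝ) pst →L[ℝ] E)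
    (u : ℕ → E) (hu : ∀ n, u n ∈ S '' Metric.closedBall 0 1) :
    ∃ y ∈ S '' Metric.closedBall 0 1, ∃ φ : ℕ → ℕ, StrictMono φ ∧
      WeaklySummable p fun n => u (φ n) - y := by
  have : p.HolderConjugate pst := ENNReal.holderConjugate_iff.2 hconj
  have hpq : p.toReal.HolderConjugate pst.toReal := ENNReal.HolderConjugate.toReal <| by
    simpa using (ENNReal.toReal_lt_toReal ENNReal.one_ne_top hp2).2 hp1
  choose v hv hSv using hu
  obtain ⟨c, hc, φ, hφ, hsum⟩ :=
    lp.exists_weaklySummable_sub_of_norm_le hpq fun n => mem_closedBall_zero_iff.1 (hv n)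
  refine ⟨S c, ⟨c, mem_closedBall_zero_iff.2 hc, rfl⟩, φ, hφ, ?_⟩
  simpa only [map_sub, hSv] using hsum.map S

/-- Let `1 < p < ∞`, `p*` its conjugate exponent (`1/p + 1/p* = 1`), and `E` a locally convex
space. For every continuous linear operator `S : ℓ_{p*} → E`, the image `S(B_{ℓ_{p*}})` of the
closed unit ball is weakly sequentially `p`-compact: every sequence in it has a subsequence
that weakly `p`-converges to a point of `S(B_{ℓ_{p*}})`. -/
theorem image_ball_weakly_seq_p_compact (p pst : ℝ≥0∞) (hp1 : 1 < p) (hp2 : p ≠ ∞)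
    (hconj : p⁻¹ + pst⁻¹ = 1) [Fact (1 ≤ pst)]
    {E : Type*} [AddCommGroup E] [Module ℝ E] [TopologicalSpace E]
    [IsTopologicalAddGroup E] [ContinuousSMul ℝ E] [LocallyConvexSpace ℝ E]
    (S : lp (fun _ : ℕ => ℝ) pst →L[ℝ] E)
    (u : ℕ → E) (hu : ∀ n, u n ∈ S '' Metric.closedBall 0 1) :
    ∃ y ∈ S '' Metric.closedBall 0 1, ∃ φ : ℕ → ℕ, StrictMono φ ∧
      WeaklySummable p fun n => u (φ n) - y :=
  image_ball_weakly_seq_p_compact_general p pst hp1 hp2 hconj S u hu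

end
end

section
/- Let 1 ≤ p < ∞. Then every bounded sequence in the Banach space ℓ_p has a weakly p-convergent subsequence (i.e., ℓ_p belongs to the class W_p) if and only if p ≥ 2. -/
/-
For `p ≥ 2`, a bounded sequence has a coordinatewise convergent subsequence whose limit `y` lies
in `ℓ_p`. The differences `x_n = u_n - y` are coordinatewise null, so a gliding hump extraction
makes `x_{ψ j}` summably close to disjointly supported blocks `h_j`. For a functional `χ`,
Hölder's inequality on each block together with `∑ |χ e_i|^q ≤ ‖χ‖^q` (`q` the conjugate
exponent) puts `(χ h_j)` in `ℓ_q ⊆ ℓ_p`, because `q ≤ 2 ≤ p`, while the remainders only add an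
`ℓ_1` sequence.

For `p < 2`, the unit vectors `e_n` are bounded. Given a subsequence `φ` and a candidate limit
`y`, let `g ∈ ℓ_2` carry `(n + 1)^{-1/p}` at `φ n` (square-summable because `p < 2`), and pair
with `g` through `ℓ_p ⊆ ℓ_2`. Along the subsequence this functional takes values that tend to `0`,
which forces it to vanish at `y`, but are not `p`-summable.
-/

open Filter Topology Bornology Pointwise
open scoped ENNReal NNReal

noncomputable section

variable {E : Type*} [AddCommGroup E] [Module ℝ E] [TopologicalSpace E]

theorem Real.summable_nat_add_one_rpow {s : ℝ} :
    Summable (fun n : ℕ => ((n : ℝ) + 1) ^ s) ↔ s < -1 := by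
  simpa [Real.summable_nat_rpow] using summable_nat_add_iff 1 (f := fun n : ℕ => (n : ℝ) ^ s)

theorem Real.le_rpow_of_le_mul_rpow_inv {p q T K : ℝ} (hpq : p.HolderConjugate q) (hT : 0 ≤ T)
    (hK : 0 ≤ K) (h : T ≤ K * T ^ p⁻¹) : T ≤ K ^ q := by
  rcases hT.eq_or_lt with rfl | hT
  · exact Real.rpow_nonneg hK q
  have hTq : T ^ q⁻¹ ≤ K := by
    rw [eq_sub_of_add_eq' hpq.inv_add_inv_eq_one, Real.rpow_sub hT, Real.rpow_one,
      div_le_iff₀ (by positivity)]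
    exact h
  calc T = (T ^ q⁻¹) ^ q := (Real.rpow_inv_rpow hT.le hpq.symm.ne_zero).symm
    _ ≤ K ^ q := Real.rpow_le_rpow (by positivity) hTq hpq.symm.nonneg

theorem Finset.sum_range_sum_Ico_of_monotone {M : Type*} [AddCommMonoid M] (F : ℕ → M)
    {b : ℕ → ℕ} (hb : Monotone b) (N : ℕ) :
    ∑ j ∈ range N, ∑ i ∈ Ico (b j) (b (j + 1)), F i = ∑ i ∈ Ico (b 0) (b N), F i := by
  induction N with
  | zero => simp
  | succ N ih => rw [sum_range_succ, ih, sum_Ico_consecutive _ (hb N.zero_le) (hb N.le_succ)]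

theorem exists_strictMono_forall_rel_succ {P : ℕ → ℕ → Prop} (h : ∀ m, ∀ᶠ n in atTop, P m n) :
    ∃ ψ : ℕ → ℕ, StrictMono ψ ∧ ∀ j, P (ψ j) (ψ (j + 1)) := by
  choose f hf using fun m => ((h m).and (eventually_gt_atTop m)).exists
  refine ⟨fun j => f^[j] 0, strictMono_nat_of_lt_succ fun j => ?_, fun j => ?_⟩
  · simpa only [Function.iterate_succ_apply'] using (hf _).2
  · simpa only [Function.iterate_succ_apply'] using (hf _).1

theorem Memℓp.tendsto_cofinite_zero {α : Type*} {G : α → Type*} [∀ i, NormedAddCommGroup (G i)]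
    {p : ℝ≥0∞} {f : ∀ i, G i} (hf : Memℓp f p) (hp : p ≠ 0) (hp' : p ≠ ∞) :
    Tendsto (fun i => ‖f i‖) cofinite (𝓝 0) := by
  have hr : 0 < p.toReal := ENNReal.toReal_pos hp hp'
  have h := (hf.summable hr).tendsto_cofinite_zero.rpow_const (p := p.toReal⁻¹)
    (Or.inr (by positivity))
  rw [Real.zero_rpow (by positivity)] at h
  exact h.congr fun i => Real.rpow_rpow_inv (norm_nonneg _) hr.ne'

section Inclusion

variable {α : Type*} {G : α → Type*} [∀ i, NormedAddCommGroup (G i)] {p q : ℝ≥0∞}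

theorem lp.norm_linearMapOfLE_le {𝕜 : Type*} [NormedRing 𝕜] [∀ i, Module 𝕜 (G i)]
    [∀ i, IsBoundedSMul 𝕜 (G i)] (hp : p ≠ 0) (hq : q ≠ ∞) (hpq : p ≤ q) (f : lp G p) :
    ‖lp.linearMapOfLE 𝕜 G hpq f‖ ≤ ‖f‖ := by
  have hpq' : p.toReal ≤ q.toReal := ENNReal.toReal_mono hq hpq
  have hp' : 0 < p.toReal := ENNReal.toReal_pos hp (ne_top_of_le_ne_top hq hpq)
  have hq' : 0 < q.toReal := hp'.trans_le hpq'
  have hsplit : ∀ x : ℝ, 0 ≤ x → x ^ q.toReal = x ^ p.toReal * x ^ (q.toReal - p.toReal) :=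
    fun x hx => by rw [← Real.rpow_add' hx (by linarith), add_sub_cancel]
  have hpt : ∀ i, ‖f i‖ ^ q.toReal ≤ ‖f i‖ ^ p.toReal * ‖f‖ ^ (q.toReal - p.toReal) :=
    fun i => by
      rw [hsplit _ (norm_nonneg _)]
      gcongr
      exact lp.norm_apply_le_norm hp f i
  rw [← Real.rpow_le_rpow_iff (lp.norm_nonneg' _) (lp.norm_nonneg' _) hq',
    lp.norm_rpow_eq_tsum hq']
  calc ∑' i, ‖lp.linearMapOfLE 𝕜 G hpq f i‖ ^ q.toReal
      ≤ ∑' i, ‖f i‖ ^ p.toReal * ‖f‖ ^ (q.toReal - p.toReal) :=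
        Summable.tsum_le_tsum hpt ((lp.memℓp _).summable hq')
          (((lp.memℓp f).summable hp').mul_right _)
    _ = ‖f‖ ^ q.toReal := by
        rw [tsum_mul_right, ← lp.norm_rpow_eq_tsum hp', ← hsplit _ (lp.norm_nonneg' _)]

variable (𝕜 : Type*) [NormedField 𝕜] [∀ i, NormedSpace 𝕜 (G i)] [Fact (1 ≤ p)] [Fact (1 ≤ q)]

def lp.continuousLinearMapOfLE (hpq : p ≤ q) (hq : q ≠ ∞) : lp G p →L[𝕜] lp G q :=
  (lp.linearMapOfLE 𝕜 G hpq).mkContinuous 1 fun f => by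
    rw [one_mul]
    exact lp.norm_linearMapOfLE_le (zero_lt_one.trans_le Fact.out).ne' hq hpq f

@[simp]
theorem lp.coe_continuousLinearMapOfLE_apply (hpq : p ≤ q) (hq : q ≠ ∞) (f : lp G p) :
    ⇑(lp.continuousLinearMapOfLE 𝕜 hpq hq f) = f :=
  lp.coe_linearMapOfLE_apply hpq f

end Inclusion

section Dual

variable {α : Type*} [DecidableEq α] {p : ℝ≥0∞} [Fact (1 ≤ p)]

theorem map_sum_lp_single (χ : lp (fun _ : α => ℝ) p →L[ℝ] ℝ) (v : α → ℝ) (s : Finset α) :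
    χ (∑ i ∈ s, lp.single p i (v i)) = ∑ i ∈ s, v i * χ (lp.single p i 1) := by
  simp only [map_sum]
  refine Finset.sum_congr rfl fun i _ => ?_
  rw [← smul_eq_mul, ← map_smul, ← lp.single_smul, smul_eq_mul, mul_one]

theorem sum_abs_map_lp_single_rpow_le {q : ℝ} (hpq : p.toReal.HolderConjugate q)
    (χ : lp (fun _ : α => ℝ) p →L[ℝ] ℝ) (s : Finset α) :
    ∑ i ∈ s, |χ (lp.single p i 1)| ^ q ≤ ‖χ‖ ^ q := by
  set c : α → ℝ := fun i => χ (lp.single p i 1)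
  set T := ∑ i ∈ s, |c i| ^ q
  -- equality case of Hölder's inequality: test `χ` on the vector `w` dual to `c`
  set w : α → ℝ := fun i => c i * |c i| ^ (q - 2)
  have hw_abs : ∀ i, |w i| = |c i| ^ (q - 1) := fun i => by
    rw [abs_mul, abs_of_nonneg (Real.rpow_nonneg (abs_nonneg (c i)) _),
      ← Real.rpow_one_add' (abs_nonneg _) (by linarith [hpq.symm.lt])]
    ring_nf
  have hwc : ∀ i, w i * c i = |c i| ^ q := fun i => by
    have h0 : 0 ≤ w i * c i := by
      simp only [w, mul_right_comm]
      exact mul_nonneg (mul_self_nonneg _) (by positivity)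
    rw [← abs_of_nonneg h0, abs_mul, hw_abs, ← Real.rpow_add_one' (abs_nonneg _)
      (by linarith [hpq.symm.lt]), sub_add_cancel]
  have hw_norm : ‖∑ i ∈ s, lp.single p i (w i)‖ = T ^ p.toReal⁻¹ := by
    rw [← Real.rpow_rpow_inv (norm_nonneg _) hpq.ne_zero, lp.norm_sum_single hpq.pos]
    congr 1
    refine Finset.sum_congr rfl fun i _ => ?_
    rw [Real.norm_eq_abs, hw_abs, ← Real.rpow_mul (abs_nonneg _), hpq.symm.sub_one_mul_conj]
  refine Real.le_rpow_of_le_mul_rpow_inv hpq (by positivity) (norm_nonneg _) ?_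
  calc T = χ (∑ i ∈ s, lp.single p i (w i)) := by
        rw [map_sum_lp_single]
        exact Finset.sum_congr rfl fun i _ => (hwc i).symm
    _ ≤ ‖χ‖ * ‖∑ i ∈ s, lp.single p i (w i)‖ := (Real.le_norm_self _).trans (χ.le_opNorm _)
    _ = ‖χ‖ * T ^ p.toReal⁻¹ := by rw [hw_norm]

theorem abs_map_sum_lp_single_le {q : ℝ} (hpq : p.toReal.HolderConjugate q)
    (χ : lp (fun _ : α => ℝ) p →L[ℝ] ℝ) (f : lp (fun _ : α => ℝ) p) (s : Finset α) :
    |χ (∑ i ∈ s, lp.single p i (f i))| ≤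
      ‖f‖ * (∑ i ∈ s, |χ (lp.single p i 1)| ^ q) ^ q⁻¹ := by
  have hf : (∑ i ∈ s, |f i| ^ p.toReal) ^ p.toReal⁻¹ ≤ ‖f‖ := by
    rw [← Real.rpow_rpow_inv (norm_nonneg f) hpq.ne_zero]
    gcongr
    simpa using lp.sum_rpow_le_norm_rpow hpq.pos f s
  rw [map_sum_lp_single]
  calc |∑ i ∈ s, f i * χ (lp.single p i 1)|
      ≤ ∑ i ∈ s, |f i| * |χ (lp.single p i 1)| := by
        simpa only [abs_mul] using
          Finset.abs_sum_le_sum_abs (fun i => f i * χ (lp.single p i 1)) s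
    _ ≤ (∑ i ∈ s, |f i| ^ p.toReal) ^ p.toReal⁻¹ *
          (∑ i ∈ s, |χ (lp.single p i 1)| ^ q) ^ q⁻¹ := by
        simpa [abs_abs] using Real.inner_le_Lp_mul_Lq s (fun i => |f i|)
          (fun i => |χ (lp.single p i 1)|) hpq
    _ ≤ _ := by gcongr

theorem exists_dual_lp_apply_single_eq (hp : p ≤ 2) (g : lp (fun _ : α => ℝ) 2) :
    ∃ χ : lp (fun _ : α => ℝ) p →L[ℝ] ℝ, ∀ k, χ (lp.single p k (1 : ℝ)) = g k := by
  refine ⟨(innerSL ℝ g).comp (lp.continuousLinearMapOfLE ℝ hp ENNReal.ofNat_ne_top),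
    fun k => ?_⟩
  have : lp.continuousLinearMapOfLE ℝ hp ENNReal.ofNat_ne_top
      (lp.single p k 1 : lp (fun _ : α => ℝ) p) = lp.single 2 k 1 := by
    ext i
    simp [lp.single_apply]
  simp [this, lp.inner_single_right]

end Dual

section Subsequences

open Finset

variable {p : ℝ≥0∞} [Fact (1 ≤ p)]

theorem exists_subseq_tendsto_apply (u : ℕ → lp (fun _ : ℕ => ℝ) p) {C : ℝ}
    (hC : ∀ n, ‖u n‖ ≤ C) :
    ∃ (y : lp (fun _ : ℕ => ℝ) p) (φ : ℕ → ℕ), StrictMono φ ∧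
      ∀ k, Tendsto (fun n => u (φ n) k) atTop (𝓝 (y k)) := by
  have hmem : ∀ n, ⇑(u n) ∈ Set.univ.pi fun _ : ℕ => Set.Icc (-C) C := fun n k _ =>
    abs_le.1 ((lp.norm_apply_le_norm (zero_lt_one.trans_le Fact.out).ne' (u n) k).trans (hC n))
  obtain ⟨a, -, φ, hφ, ha⟩ := (isCompact_univ_pi fun _ => isCompact_Icc).tendsto_subseq hmem
  have hbdd : Bornology.IsBounded (Set.range fun n => u (φ n)) :=
    isBounded_iff_forall_norm_le.2 ⟨C, Set.forall_mem_range.2 fun n => hC (φ n)⟩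
  exact ⟨⟨a, lp.memℓp_of_tendsto hbdd ha⟩, φ, hφ, tendsto_pi_nhds.1 ha⟩

theorem exists_gliding_hump (hp : p ≠ ∞) (x : ℕ → lp (fun _ : ℕ => ℝ) p)
    (hx : ∀ k, Tendsto (fun n => x n k) atTop (𝓝 0)) :
    ∃ (ψ b : ℕ → ℕ), StrictMono ψ ∧ Monotone b ∧
      Summable fun j => ‖x (ψ j) - ∑ i ∈ Ico (b j) (b (j + 1)), lp.single p i (x (ψ j) i)‖ := by
  have htail : ∀ n, ∃ M ≥ n, ‖x n - ∑ i ∈ range M, lp.single p i (x n i)‖ ≤ (1 / 2) ^ n := by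
    intro n
    have h := tendsto_iff_norm_sub_tendsto_zero.1 (lp.hasSum_single hp (x n)).tendsto_sum_nat
    simp_rw [norm_sub_rev] at h
    exact ((eventually_ge_atTop n).and (h.eventually (eventually_le_nhds (by positivity)))).exists
  choose M hMn hM using htail
  have hhead : ∀ N, Tendsto (fun n => ∑ i ∈ range N, lp.single p i (x n i)) atTop (𝓝 0) := by
    intro N
    simpa using tendsto_finsetSum (range N) fun i _ =>
      ((lp.singleContinuousLinearMap ℝ (fun _ : ℕ => ℝ) p i).continuous.tendsto 0).comp (hx i)
  obtain ⟨ψ, hψ, hP⟩ := exists_strictMono_forall_rel_succ (P := fun m n =>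
      M m ≤ M n ∧ ‖∑ i ∈ range (M m), lp.single p i (x n i)‖ ≤ (1 / 2) ^ m) fun m =>
    ((eventually_ge_atTop (M m)).mono fun n hn => hn.trans (hMn n)).and
      ((hhead (M m)).norm.eventually (eventually_le_nhds (by norm_num)))
  refine ⟨ψ ∘ Nat.succ, M ∘ ψ, hψ.comp fun _ _ => Nat.succ_lt_succ,
    monotone_nat_of_le_succ fun j => (hP j).1, (summable_geometric_two.mul_left 2).of_nonneg_of_le (fun _ => norm_nonneg _) fun j => ?_⟩
  have hle : ∀ m ≥ j, ((1 : ℝ) / 2) ^ m ≤ (1 / 2) ^ j := fun m hm =>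
    pow_le_pow_of_le_one (by norm_num) (by norm_num) hm
  set y := x (ψ (j + 1))
  have hsplit : y - ∑ i ∈ Ico (M (ψ j)) (M (ψ (j + 1))), lp.single p i (y i) =
      (y - ∑ i ∈ range (M (ψ (j + 1))), lp.single p i (y i)) +
        ∑ i ∈ range (M (ψ j)), lp.single p i (y i) := by
    rw [← sum_range_add_sum_Ico _ (hP j).1]
    abel
  calc ‖y - ∑ i ∈ Ico (M (ψ j)) (M (ψ (j + 1))), lp.single p i (y i)‖
      ≤ (1 / 2) ^ ψ (j + 1) + (1 / 2) ^ ψ j := by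
        rw [hsplit]
        exact (norm_add_le _ _).trans (add_le_add (hM _) (hP j).2)
    _ ≤ 2 * (1 / 2) ^ j := by
        linarith [hle _ ((hψ.id_le j).trans (hψ.monotone j.le_succ)), hle _ (hψ.id_le j)]

theorem memℓp_map_of_summable_norm_sub_sum_Ico (hp2 : 2 ≤ p) (hp : p ≠ ∞)
    {y : ℕ → lp (fun _ : ℕ => ℝ) p} {C : ℝ} (hC : ∀ j, ‖y j‖ ≤ C) {b : ℕ → ℕ} (hb : Monotone b)
    (hrem : Summable fun j => ‖y j - ∑ i ∈ Ico (b j) (b (j + 1)), lp.single p i (y j i)‖)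
    (χ : lp (fun _ : ℕ => ℝ) p →L[ℝ] ℝ) :
    Memℓp (fun j => χ (y j)) p := by
  have hr2 : 2 ≤ p.toReal := by simpa using ENNReal.toReal_mono hp hp2
  set q := p.toReal.conjExponent
  have hpq : p.toReal.HolderConjugate q := .conjExponent (by linarith)
  have hp_inv : p.toReal⁻¹ ≤ 2⁻¹ := inv_anti₀ (by norm_num) hr2
  have hqp : q ≤ p.toReal :=
    (inv_le_inv₀ hpq.pos hpq.symm.pos).1 (by linarith [hpq.inv_add_inv_eq_one])
  have hC0 : 0 ≤ C := (norm_nonneg _).trans (hC 0)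
  set h := fun j => ∑ i ∈ Ico (b j) (b (j + 1)), lp.single p i (y j i)
  set s := fun j => ∑ i ∈ Ico (b j) (b (j + 1)), |χ (lp.single p i 1)| ^ q
  have hs : Summable s := summable_of_sum_range_le (fun _ => by positivity) fun N => by
    rw [sum_range_sum_Ico_of_monotone _ hb]
    exact sum_abs_map_lp_single_rpow_le hpq χ _
  have hblocks : Memℓp (fun j => χ (h j)) (ENNReal.ofReal q) := by
    refine memℓp_gen ?_
    rw [ENNReal.toReal_ofReal hpq.symm.nonneg]
    refine (hs.mul_left (C ^ q)).of_nonneg_of_le (fun _ => by positivity) fun j => ?_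
    calc ‖χ (h j)‖ ^ q ≤ (C * s j ^ q⁻¹) ^ q := by
          refine Real.rpow_le_rpow (norm_nonneg _) ?_ hpq.symm.nonneg
          exact (abs_map_sum_lp_single_le hpq χ (y j) _).trans
            (mul_le_mul_of_nonneg_right (hC j) (by positivity))
      _ = C ^ q * s j := by
          rw [Real.mul_rpow hC0 (by positivity),
            Real.rpow_inv_rpow (by positivity) hpq.symm.ne_zero]
  have hrest : Memℓp (fun j => χ (y j - h j)) 1 := memℓp_gen <| by
    simp only [ENNReal.toReal_one, Real.rpow_one]
    exact (hrem.mul_left ‖χ‖).of_nonneg_of_le (fun _ => norm_nonneg _) fun j => χ.le_opNorm _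
  have hsum : (fun j => χ (y j)) = (fun j => χ (h j)) + fun j => χ (y j - h j) := by
    ext j
    simp
  have hqp' : ENNReal.ofReal q ≤ p := (ENNReal.ofReal_le_iff_le_toReal hp).2 hqp
  rw [hsum]
  exact (hblocks.of_exponent_ge hqp').add (hrest.of_exponent_ge Fact.out)

theorem exists_subseq_weaklySummable_sub (hp2 : 2 ≤ p) (hp : p ≠ ∞)
    (u : ℕ → lp (fun _ : ℕ => ℝ) p) {C : ℝ} (hC : ∀ n, ‖u n‖ ≤ C) :
    ∃ (y : lp (fun _ : ℕ => ℝ) p) (φ : ℕ → ℕ), StrictMono φ ∧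
      WeaklySummable p fun n => u (φ n) - y := by
  obtain ⟨y, φ, hφ, hy⟩ := exists_subseq_tendsto_apply u hC
  obtain ⟨ψ, b, hψ, hb, hrem⟩ := exists_gliding_hump hp (fun n => u (φ n) - y) fun k => by
    simpa using (hy k).sub_const (y k)
  refine ⟨y, φ ∘ ψ, hφ.comp hψ, fun χ => Or.inl ⟨hp, ?_⟩⟩
  exact memℓp_map_of_summable_norm_sub_sum_Ico hp2 hp (C := C + ‖y‖)
    (fun j => (norm_sub_le _ _).trans (by gcongr; exact hC _)) hb hrem χ

theorem not_weaklySummable_single_sub (hp : p < 2) {φ : ℕ → ℕ} (hφ : Function.Injective φ)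
    (y : lp (fun _ : ℕ => ℝ) p) :
    ¬ WeaklySummable p fun n => lp.single p (φ n) 1 - y := by
  have hp0 : 0 < p.toReal := ENNReal.toReal_pos (zero_lt_one.trans_le Fact.out).ne' hp.ne_top
  have hp2 : p.toReal < 2 := by simpa using ENNReal.toReal_strict_mono (by simp) hp
  set a : ℕ → ℝ := fun n => ((n : ℝ) + 1) ^ (-p.toReal⁻¹)
  have ha : ∀ n s, ‖a n‖ ^ s = ((n : ℝ) + 1) ^ (-p.toReal⁻¹ * s) := fun n s => by
    rw [Real.norm_eq_abs, abs_of_nonneg (by positivity), ← Real.rpow_mul (by positivity)]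
  have hg : Memℓp (Function.extend φ a 0) 2 := by
    refine memℓp_gen ((hφ.summable_iff fun i hi => ?_).1 ?_)
    · simp [Function.extend_apply' _ _ _ hi]
    · simp only [Function.comp_def, hφ.extend_apply, ha, ENNReal.toReal_ofNat]
      exact Real.summable_nat_add_one_rpow.2 (by
        rw [neg_mul, neg_lt_neg_iff, ← div_eq_inv_mul, lt_div_iff₀ hp0]; linarith)
  obtain ⟨χ, hχ⟩ := exists_dual_lp_apply_single_eq hp.le ⟨_, hg⟩
  intro H
  obtain ⟨-, hχa⟩ := (H χ).resolve_right fun h => hp.ne_top h.1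
  simp only [map_sub, hχ, hφ.extend_apply] at hχa
  have hχy : χ y = 0 := by
    have ha0 : Tendsto a atTop (𝓝 0) := (tendsto_rpow_neg_atTop (by positivity)).comp
      (tendsto_natCast_atTop_atTop.atTop_add tendsto_const_nhds)
    have hχa0 := hχa.tendsto_cofinite_zero (zero_lt_one.trans_le Fact.out).ne' hp.ne_top
    rw [Nat.cofinite_eq_atTop, ← tendsto_zero_iff_norm_tendsto_zero] at hχa0
    have h := ha0.sub hχa0
    simp only [sub_sub_cancel, sub_zero] at h
    exact tendsto_nhds_unique tendsto_const_nhds h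
  have hsum := (show Memℓp a p by simpa [hχy] using hχa).summable hp0
  simp only [ha, neg_mul, inv_mul_cancel₀ hp0.ne'] at hsum
  exact lt_irrefl _ (Real.summable_nat_add_one_rpow.1 hsum)

end Subsequences

theorem lp_in_Wp_iff_general (p : ℝ≥0∞) (hp2 : p ≠ ∞) [Fact (1 ≤ p)] :
    (∀ u : ℕ → lp (fun _ : ℕ => ℝ) p, (∃ C : ℝ, ∀ n, ‖u n‖ ≤ C) →
      ∃ (y : lp (fun _ : ℕ => ℝ) p) (φ : ℕ → ℕ), StrictMono φ ∧
        WeaklySummable p fun n => u (φ n) - y) ↔ 2 ≤ p := by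
  refine ⟨fun H => ?_, fun hp u ⟨C, hC⟩ => exists_subseq_weaklySummable_sub hp hp2 u hC⟩
  by_contra! hp
  have hbdd : ∀ n, ‖(lp.single p n 1 : lp (fun _ : ℕ => ℝ) p)‖ ≤ 1 := fun n => by
    rw [lp.norm_single (zero_lt_one.trans_le Fact.out), norm_one]
  obtain ⟨y, φ, hφ, hy⟩ := H _ ⟨1, hbdd⟩
  exact not_weaklySummable_single_sub hp hφ.injective y hy

/-- Let `1 ≤ p < ∞`. Every bounded sequence in `ℓ_p` has a weakly `p`-convergent subsequence
(i.e. `ℓ_p` belongs to the class `W_p`) iff `p ≥ 2`. -/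
theorem lp_in_Wp_iff (p : ℝ≥0∞) (hp1 : 1 ≤ p) (hp2 : p ≠ ∞) [Fact (1 ≤ p)] :
    (∀ u : ℕ → lp (fun _ : ℕ => ℝ) p, (∃ C : ℝ, ∀ n, ‖u n‖ ≤ C) →
      ∃ (y : lp (fun _ : ℕ => ℝ) p) (φ : ℕ → ℕ), StrictMono φ ∧
        WeaklySummable p fun n => u (φ n) - y) ↔ 2 ≤ p :=
  lp_in_Wp_iff_general p hp2

end
end

section
/- Let E be a barrelled locally convex space. If E has the property sV* — every (V*) subset of E is relatively weakly sequentially compact — then E is weakly sequentially complete: every weakly Cauchy sequence in E converges in the weak topology of E. -/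
open Filter Topology Bornology Pointwise
open scoped ENNReal NNReal

noncomputable section

variable {E : Type*} [AddCommGroup E] [Module ℝ E] [TopologicalSpace E]

/-! Let `(xₖ)` be weakly Cauchy and let `(χₙ)` be weakly `1`-summable in `E'_β`. Evaluating
at a point is continuous on `E'_β`, so every column `(χₙ(xₖ))ₙ` lies in `ℓ¹`. In a barrelled
space a pointwise convergent series of continuous functionals has a continuous sum
(Banach–Steinhaus), so `∑ ξₙ χₙ ∈ E'` for every bounded `ξ`: the columns form a weakly Cauchy
sequence in `ℓ¹`. By Schur's gliding hump argument they are then norm Cauchy in `ℓ¹`, which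
forces `supₖ |χₙ(xₖ)| → 0`; thus the range of `x` is a `(V*)` set. By `sV*` some subsequence
of `x` converges weakly, and a weakly Cauchy sequence with a weakly convergent subsequence
converges weakly. -/

theorem summable_mul_of_abs_le_one {f ξ : ℕ → ℝ} (hf : Summable f) (hξ : ∀ n, |ξ n| ≤ 1) :
    Summable fun n => ξ n * f n :=
  hf.abs.of_norm_bounded fun n => by
    rw [Real.norm_eq_abs, abs_mul]
    exact mul_le_of_le_one_left (abs_nonneg _) (hξ n)

theorem two_mul_sum_abs_sub_tsum_abs_le_tsum_mul {f ξ : ℕ → ℝ} (hf : Summable f)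
    (hξ : ∀ n, |ξ n| ≤ 1) {s : Finset ℕ} (hs : ∀ n ∈ s, ξ n * f n = |f n|) :
    2 * ∑ n ∈ s, |f n| - ∑' n, |f n| ≤ ∑' n, ξ n * f n := by
  have hξf := summable_mul_of_abs_le_one hf hξ
  have hnonneg : ∀ n, 0 ≤ ξ n * f n + |f n| := fun n => by
    have : |ξ n * f n| ≤ |f n| := by
      rw [abs_mul]
      exact mul_le_of_le_one_left (abs_nonneg _) (hξ n)
    linarith [neg_abs_le (ξ n * f n)]
  have hs' : ∑ n ∈ s, (ξ n * f n + |f n|) = 2 * ∑ n ∈ s, |f n| := by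
    rw [Finset.mul_sum]
    exact Finset.sum_congr rfl fun n hn => by rw [hs n hn]; ring
  have := (hξf.add hf.abs).sum_le_tsum s fun n _ => hnonneg n
  rw [hs', hξf.tsum_add hf.abs] at this
  linarith

theorem exists_concentrated_block {w : ℕ → ℕ → ℝ} (hw : ∀ j, Summable (w j))
    (hcoord : ∀ n, Tendsto (fun j => w j n) atTop (𝓝 0)) {δ : ℝ} (hδ : 0 < δ) (m N : ℕ) :
    ∃ j ≥ m, ∃ N' > N, ∑' n, |w j n| < ∑ n ∈ Finset.Ico N N', |w j n| + δ := by
  have hhead : Tendsto (fun j => ∑ n ∈ Finset.range N, |w j n|) atTop (𝓝 0) := by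
    simpa using tendsto_finsetSum (Finset.range N) fun n _ => (hcoord n).abs
  obtain ⟨j, hjm, hj⟩ :=
    ((eventually_ge_atTop m).and (hhead.eventually_lt_const (half_pos hδ))).exists
  have htail := (hw j).abs.tendsto_sum_tsum_nat.eventually_const_lt
    (show ∑' n, |w j n| - δ / 2 < ∑' n, |w j n| by linarith)
  obtain ⟨N', hN'N, hN'⟩ := ((eventually_gt_atTop N).and htail).exists
  refine ⟨j, hjm, N', hN'N, ?_⟩
  rw [← Finset.sum_range_add_sum_Ico _ hN'N.le] at hN'
  linarith

theorem StrictMono.exists_forall_mem_Ico_eq {N : ℕ → ℕ} (hN : StrictMono N) (h0 : N 0 = 0) :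
    ∃ b : ℕ → ℕ, ∀ m, ∀ n ∈ Finset.Ico (N m) (N (m + 1)), b n = m := by
  have (n : ℕ) : ∃ m, N m < n + 1 ∧ n + 1 ≤ N (m + 1) :=
    hN.exists_between_of_tendsto_atTop hN.tendsto_atTop (by omega)
  choose b hb₁ hb₂ using this
  refine ⟨b, fun m n hn => ?_⟩
  rw [Finset.mem_Ico] at hn
  have := hb₁ n
  have := hb₂ n
  have h₁ : b n < m + 1 := hN.lt_iff_lt.1 (by omega)
  have h₂ : m < b n + 1 := hN.lt_iff_lt.1 (by omega)
  omega

theorem exists_frequently_le_tsum_mul {w : ℕ → ℕ → ℝ} (hw : ∀ j, Summable (w j))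
    (hcoord : ∀ n, Tendsto (fun j => w j n) atTop (𝓝 0)) {ε : ℝ} (hε : 0 < ε)
    (hlow : ∀ j, ε ≤ ∑' n, |w j n|) :
    ∃ ξ : ℕ → ℝ, (∀ n, |ξ n| ≤ 1) ∧ ∃ᶠ j in atTop, ε / 2 ≤ ∑' n, ξ n * w j n := by
  choose J hJ N' hN' hconc using exists_concentrated_block hw hcoord (by positivity : 0 < ε / 4)
  -- the `m`-th hump is `w (J m (N m))`, carrying all but `ε / 4` of its mass on `[N m, N (m+1))`
  let N : ℕ → ℕ := fun m => Nat.rec 0 (fun m Nm => N' m Nm) m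
  obtain ⟨b, hb⟩ := (strictMono_nat_of_lt_succ fun m => hN' m (N m)).exists_forall_mem_Ico_eq rfl
  let ξ : ℕ → ℝ := fun n => SignType.sign (w (J (b n) (N (b n))) n)
  have hξ : ∀ n, |ξ n| ≤ 1 := fun n => by
    simp only [ξ]
    generalize SignType.sign (w (J (b n) (N (b n))) n) = s
    cases s <;> simp
  refine ⟨ξ, hξ, frequently_atTop.2 fun m => ⟨J m (N m), hJ m (N m), ?_⟩⟩
  have hsign : ∀ n ∈ Finset.Ico (N m) (N (m + 1)), ξ n * w (J m (N m)) n = |w (J m (N m)) n| :=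
    fun n hn => by simp only [ξ, hb m n hn]; exact sign_mul_self _
  linarith [two_mul_sum_abs_sub_tsum_abs_le_tsum_mul (hw _) hξ hsign, hconc m (N m),
    hlow (J m (N m))]

theorem tendsto_tsum_abs_of_forall_tendsto_tsum_mul {w : ℕ → ℕ → ℝ} (hw : ∀ j, Summable (w j))
    (h : ∀ ξ : ℕ → ℝ, (∀ n, |ξ n| ≤ 1) → Tendsto (fun j => ∑' n, ξ n * w j n) atTop (𝓝 0)) :
    Tendsto (fun j => ∑' n, |w j n|) atTop (𝓝 0) := by
  have hcoord : ∀ n, Tendsto (fun j => w j n) atTop (𝓝 0) := fun n => by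
    simpa [ite_mul, tsum_ite_eq] using
      h (fun m => if m = n then 1 else 0) fun m => by split_ifs <;> simp
  refine tendsto_order.2 ⟨fun a ha => Eventually.of_forall fun j =>
    ha.trans_le (tsum_nonneg fun n => abs_nonneg _), fun ε hε => ?_⟩
  by_contra hfreq
  obtain ⟨φ, hφ, hlow⟩ := extraction_of_frequently_atTop (P := fun j => ε ≤ ∑' n, |w j n|)
    (by simpa only [not_eventually, not_lt] using hfreq)
  obtain ⟨ξ, hξ, hfr⟩ := exists_frequently_le_tsum_mul (fun j => hw (φ j))
    (fun n => (hcoord n).comp hφ.tendsto_atTop) hε hlow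
  have hsmall := ((h ξ hξ).comp hφ.tendsto_atTop).eventually_lt_const (half_pos hε)
  obtain ⟨j, hj₁, hj₂⟩ := (hfr.and_eventually hsmall).exists
  exact hj₁.not_gt hj₂

theorem tendsto_tsum_abs_sub_of_cauchySeq_tsum_mul {c : ℕ → ℕ → ℝ} (hc : ∀ k, Summable (c k))
    (h : ∀ ξ : ℕ → ℝ, (∀ n, |ξ n| ≤ 1) → CauchySeq fun k => ∑' n, ξ n * c k n) :
    Tendsto (fun p : ℕ × ℕ => ∑' n, |c p.1 n - c p.2 n|) atTop (𝓝 0) := by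
  refine tendsto_iff_seq_tendsto.2 fun p hp => ?_
  rw [← prod_atTop_atTop_eq] at hp
  refine tendsto_tsum_abs_of_forall_tendsto_tsum_mul (fun j => (hc _).sub (hc _)) fun ξ hξ => ?_
  obtain ⟨L, hL⟩ := cauchySeq_tendsto_of_complete (h ξ hξ)
  have hsub (j : ℕ) : ∑' n, ξ n * (c (p j).1 n - c (p j).2 n)
      = ∑' n, ξ n * c (p j).1 n - ∑' n, ξ n * c (p j).2 n := by
    simp only [mul_sub]
    exact (summable_mul_of_abs_le_one (hc _) hξ).tsum_sub (summable_mul_of_abs_le_one (hc _) hξ)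
  simpa only [Function.comp_def, hsub, sub_self] using
    (hL.comp (tendsto_fst.comp hp)).sub (hL.comp (tendsto_snd.comp hp))

theorem tendstoUniformly_zero_of_cauchySeq_tsum_mul {c : ℕ → ℕ → ℝ} (hc : ∀ k, Summable (c k))
    (h : ∀ ξ : ℕ → ℝ, (∀ n, |ξ n| ≤ 1) → CauchySeq fun k => ∑' n, ξ n * c k n) :
    TendstoUniformly (fun n k => c k n) 0 atTop := by
  refine Metric.tendstoUniformly_iff.2 fun ε hε => ?_
  obtain ⟨K, hK⟩ := eventually_atTop_prod_self.1
    ((tendsto_tsum_abs_sub_of_cauchySeq_tsum_mul hc h).eventually_lt_const (half_pos hε))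
  have hfirst : ∀ᶠ n in atTop, ∀ k ∈ Set.Iic K, |c k n| < ε / 2 :=
    (Set.finite_Iic K).eventually_all.2 fun k _ =>
      (hc k).tendsto_atTop_zero.abs.eventually_lt_const (by simpa using half_pos hε)
  filter_upwards [hfirst] with n hn k
  rw [Pi.zero_apply, dist_zero_left, Real.norm_eq_abs]
  rcases le_total k K with hk | hk
  · exact (hn k hk).trans (half_lt_self hε)
  · have hdiff : |c k n - c K n| ≤ ∑' m, |c k m - c K m| :=
      ((hc k).sub (hc K)).abs.le_tsum n fun m _ => abs_nonneg _
    linarith [abs_sub_abs_le_abs_sub (c k n) (c K n), hK k K hk le_rfl, hn K (le_refl K)]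

theorem TendstoUniformly.tendsto_iSup_nnnorm {ι α β : Type*} [SeminormedAddGroup β]
    {F : ι → α → β} {p : Filter ι} (h : TendstoUniformly F 0 p) :
    Tendsto (fun i => ⨆ a, (‖F i a‖₊ : ℝ≥0∞)) p (𝓝 0) := by
  refine ENNReal.tendsto_nhds_zero.2 fun ε hε => ?_
  filter_upwards [EMetric.tendstoUniformly_iff.1 h ε hε] with i hi
  exact iSup_le fun a => by simpa [edist_zero_left] using (hi a).le

theorem BarrelledSpace.of_barrel_mem_nhds [IsTopologicalAddGroup E] [ContinuousConstSMul ℝ E]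
    (h : ∀ B : Set E, IsClosed B → Convex ℝ B → Balanced ℝ B → Absorbent ℝ B → B ∈ 𝓝 (0 : E)) :
    BarrelledSpace ℝ E where
  continuous_of_lowerSemicontinuous p hp := by
    have hclosed : IsClosed (p.closedBall 0 1) := by
      convert hp.isClosed_preimage 1
      ext; simp
    exact Seminorm.continuous' (r := 1) (h _ hclosed (p.convex_closedBall 0 1)
      (p.balanced_closedBall_zero 1) (p.absorbent_closedBall_zero one_pos))

theorem WeaklySummable.summable_apply [ContinuousSMul ℝ E] {χ : ℕ → E →L[ℝ] ℝ}
    (hχ : WeaklySummable 1 χ) (y : E) : Summable fun n => χ n y := by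
  let ev : (E →L[ℝ] ℝ) →L[ℝ] ℝ := ⟨(ContinuousLinearMap.coeLM ℝ).flip y, continuous_eval_const y⟩
  rcases hχ ev with ⟨-, h⟩ | ⟨h, -⟩
  · change Memℓp (fun n => χ n y) 1 at h
    exact Summable.of_norm (by simpa using (memℓp_gen_iff (by simp)).1 h)
  · exact absurd h ENNReal.one_ne_top

theorem exists_hasSum_apply_of_summable [IsTopologicalAddGroup E] [ContinuousSMul ℝ E]
    [BarrelledSpace ℝ E] {χ : ℕ → E →L[ℝ] ℝ} (h : ∀ y, Summable fun n => χ n y) :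
    ∃ g : E →L[ℝ] ℝ, ∀ y, HasSum (fun n => χ n y) (g y) := by
  let _ := IsTopologicalAddGroup.rightUniformSpace E
  have _ := isUniformAddGroup_of_addCommGroup (G := E)
  have hlim : Tendsto (fun N y => (∑ n ∈ Finset.range N, χ n) y) atTop
      (𝓝 fun y => ∑' n, χ n y) :=
    tendsto_pi_nhds.2 fun y => by simpa using (h y).tendsto_sum_tsum_nat
  exact ⟨continuousLinearMapOfTendsto _ hlim, fun y => (h y).hasSum⟩

theorem isVAstSet_range_of_cauchySeq [IsTopologicalAddGroup E] [ContinuousSMul ℝ E]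
    [BarrelledSpace ℝ E] {x : ℕ → E} (hx : ∀ χ : E →L[ℝ] ℝ, CauchySeq fun n => χ (x n)) :
    IsVAstSet 1 ∞ (Set.range x) := by
  intro χ hχ
  have hunif : TendstoUniformly (fun n k => χ n (x k)) 0 atTop := by
    refine tendstoUniformly_zero_of_cauchySeq_tsum_mul (c := fun k n => χ n (x k))
      (fun k => hχ.summable_apply (x k)) fun ξ hξ => ?_
    obtain ⟨g, hg⟩ := exists_hasSum_apply_of_summable (χ := fun n => ξ n • χ n)
      fun y => summable_mul_of_abs_le_one (hχ.summable_apply y) hξ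
    have hgx (k : ℕ) : ∑' n, ξ n * χ n (x k) = g (x k) := (hg (x k)).tsum_eq
    simpa only [hgx] using hx g
  exact Or.inr ⟨rfl, by simpa only [iSup_range] using hunif.tendsto_iSup_nnnorm⟩

theorem tendsto_toWeakSp_iff {ι : Type*} {l : Filter ι} {f : ι → E} {y : E} :
    Tendsto (fun i => toWeakSp (f i)) l (𝓝 (toWeakSp y)) ↔
      ∀ χ : E →L[ℝ] ℝ, Tendsto (fun i => χ (f i)) l (𝓝 (χ y)) := by
  have hind : IsInducing fun (z : WeakSpace ℝ E) (χ : E →L[ℝ] ℝ) => (topDualPairing ℝ E).flip z χ :=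
    ⟨rfl⟩
  rw [hind.tendsto_nhds_iff, tendsto_pi_nhds]
  rfl

theorem tendsto_toWeakSp_of_cauchySeq_of_subseq {x : ℕ → E}
    (hx : ∀ χ : E →L[ℝ] ℝ, CauchySeq fun n => χ (x n)) {φ : ℕ → ℕ} (hφ : StrictMono φ) {y : E}
    (hy : Tendsto (fun n => toWeakSp (x (φ n))) atTop (𝓝 (toWeakSp y))) :
    Tendsto (fun n => toWeakSp (x n)) atTop (𝓝 (toWeakSp y)) :=
  tendsto_toWeakSp_iff.2 fun χ =>
    tendsto_nhds_of_cauchySeq_of_subseq (hx χ) hφ.tendsto_atTop (tendsto_toWeakSp_iff.1 hy χ)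

theorem sVAst_implies_weakly_sequentially_complete_general
    {E : Type*} [AddCommGroup E] [Module ℝ E] [TopologicalSpace E]
    [IsTopologicalAddGroup E] [ContinuousSMul ℝ E]
    (hbarrelled : ∀ B : Set E, IsClosed B → Convex ℝ B → Balanced ℝ B →
      Absorbent ℝ B → B ∈ nhds (0 : E))
    (hsV : ∀ A : Set E, IsVAstSet 1 ∞ A →
      ∀ u : ℕ → E, (∀ n, u n ∈ A) → ∃ (y : E) (φ : ℕ → ℕ), StrictMono φ ∧
        Tendsto (fun n => toWeakSp (u (φ n))) atTop (nhds (toWeakSp y))) :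
    ∀ x : ℕ → E, (∀ χ : E →L[ℝ] ℝ, CauchySeq fun n => χ (x n)) →
      ∃ y : E, Tendsto (fun n => toWeakSp (x n)) atTop (nhds (toWeakSp y)) := by
  have := BarrelledSpace.of_barrel_mem_nhds hbarrelled
  intro x hx
  obtain ⟨y, φ, hφ, hy⟩ := hsV _ (isVAstSet_range_of_cauchySeq hx) x Set.mem_range_self
  exact ⟨y, tendsto_toWeakSp_of_cauchySeq_of_subseq hx hφ hy⟩

/-- Let `E` be a barrelled locally convex space (every barrel — closed absolutely convex
absorbing set — is a neighborhood of `0`). If `E` has the property `sV*`, i.e. every `(V*)`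
subset of `E` is relatively weakly sequentially compact, then `E` is weakly sequentially
complete: every weakly Cauchy sequence in `E` converges in the weak topology of `E`. -/
theorem sVAst_implies_weakly_sequentially_complete
    {E : Type*} [AddCommGroup E] [Module ℝ E] [TopologicalSpace E]
    [IsTopologicalAddGroup E] [ContinuousSMul ℝ E] [LocallyConvexSpace ℝ E]
    (hbarrelled : ∀ B : Set E, IsClosed B → Convex ℝ B → Balanced ℝ B →
      Absorbent ℝ B → B ∈ nhds (0 : E))
    (hsV : ∀ A : Set E, IsVAstSet 1 ∞ A →
      ∀ u : ℕ → E, (∀ n, u n ∈ A) → ∃ (y : E) (φ : ℕ → ℕ), StrictMono φ ∧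
        Tendsto (fun n => toWeakSp (u (φ n))) atTop (nhds (toWeakSp y))) :
    ∀ x : ℕ → E, (∀ χ : E →L[ℝ] ℝ, CauchySeq fun n => χ (x n)) →
      ∃ y : E, Tendsto (fun n => toWeakSp (x n)) atTop (nhds (toWeakSp y)) :=
  sVAst_implies_weakly_sequentially_complete_general hbarrelled hsV

end
end
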